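/- arXiv:0706.3558 — 3 statements merged into one kernel-verified Lean document; each statement's English description precedes it below -/
import Mathlib

section
/- Let V_1, …, V_K be independent Exponential random variables with means θ_1, …, θ_K, and define μ_V = 1/(1 + ∑_{i=1}^{K} exp(-(V_1+⋯+V_i))) and μ̄_V = 1/(1 + ∑_{i=1}^{K} exp(-(θ_1+⋯+θ_i))). Then, with σ² = ∑_{i=1}^K θ_i², one has E[μ_V] ≥ e^{-σ²} μ̄_V. -/
/-!
By independence, `E[exp(-(V₁ + ⋯ + Vᵢ))] = ∏_{j ≤ i} E[exp(-Vⱼ)] = ∏_{j ≤ i} (1 + θⱼ)⁻¹`.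
Since `x ↦ (1 + x)⁻¹` is convex on `[0, ∞)`, Jensen's inequality gives
`E[μ_V] ≥ (1 + ∑ᵢ ∏_{j ≤ i} (1 + θⱼ)⁻¹)⁻¹`, and `(1 + θ)⁻¹ ≤ exp(θ² - θ)` bounds each product
by `exp(σ²) exp(-(θ₁ + ⋯ + θᵢ))`; pulling the factor `exp(σ²) ≥ 1` out of the denominator
concludes.
-/

open MeasureTheory ProbabilityTheory Finset Real

lemma integral_exp_neg_expMeasure {r : ℝ} (hr : 0 < r) :
    ∫ x, exp (-x) ∂expMeasure r = r / (r + 1) := by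
  have hdens : ∀ x, (exponentialPDF r x).toReal • exp (-x)
      = Set.indicator (Set.Ici 0) (fun x => r * exp (-(r + 1) * x)) x := by
    intro x
    rcases le_or_gt 0 x with hx | hx
    · rw [Set.indicator_of_mem (Set.mem_Ici.mpr hx), exponentialPDF_of_nonneg hx,
        ENNReal.toReal_ofReal (by positivity), smul_eq_mul, mul_assoc, ← exp_add]
      ring_nf
    · rw [Set.indicator_of_notMem (Set.notMem_Ici.mpr hx), exponentialPDF_of_neg hx]
      simp
  change ∫ x, exp (-x) ∂volume.withDensity (exponentialPDF r) = _
  rw [integral_withDensity_eq_integral_toReal_smul (f := exponentialPDF r)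
    (measurable_exponentialPDFReal r).ennreal_ofReal (ae_of_all _ fun _ => ENNReal.ofReal_lt_top)]
  simp_rw [hdens]
  rw [integral_indicator measurableSet_Ici, integral_Ici_eq_integral_Ioi, integral_const_mul,
    integral_exp_mul_Ioi (by linarith) 0]
  field_simp
  simp

lemma convexOn_inv_one_add : ConvexOn ℝ (Set.Ici 0) fun x : ℝ => (1 + x)⁻¹ := by
  have hsub : Set.Ici (0 : ℝ) ⊆ (fun z => 1 + z) ⁻¹' Set.Ioi 0 := fun x hx => by
    simp only [Set.mem_Ici, Set.preimage_const_add_Ioi, zero_sub, Set.mem_Ioi] at hx ⊢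
    linarith
  have h := ((convexOn_zpow (𝕜 := ℝ) (-1)).translate_right 1).subset hsub (convex_Ici 0)
  simpa [Function.comp_def, zpow_neg_one] using h

section

variable {Ω : Type*} [MeasurableSpace Ω] {μ : Measure Ω}

lemma mgf_neg_one_of_map_eq_expMeasure {X : Ω → ℝ} (hX : AEMeasurable X μ) {θ : ℝ}
    (hθ : 0 < θ) (hdist : μ.map X = expMeasure θ⁻¹) :
    mgf X μ (-1) = (1 + θ)⁻¹ := by
  have h := integral_map hX (f := fun x => exp (-x)) (by fun_prop)
  rw [hdist, integral_exp_neg_expMeasure (inv_pos.mpr hθ)] at h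
  simp only [mgf, neg_one_mul, ← h]
  field_simp

lemma integral_exp_neg_sum_of_iIndepFun_expMeasure {ι : Type*} {V : ι → Ω → ℝ} {θ : ι → ℝ}
    (hindep : iIndepFun V μ) (hmeas : ∀ i, Measurable (V i)) (hθ : ∀ i, 0 < θ i)
    (hdist : ∀ i, μ.map (V i) = expMeasure (θ i)⁻¹) (s : Finset ι) :
    ∫ ω, exp (-∑ i ∈ s, V i ω) ∂μ = ∏ i ∈ s, (1 + θ i)⁻¹ := by
  have h := hindep.mgf_sum hmeas (t := -1) s
  simp only [mgf_neg_one_of_map_eq_expMeasure (hmeas _).aemeasurable (hθ _) (hdist _)] at h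
  simpa only [mgf, Finset.sum_apply, neg_one_mul] using h

lemma inv_one_add_integral_le [IsProbabilityMeasure μ] {X : Ω → ℝ} (hX : Integrable X μ)
    (hX_nonneg : ∀ᵐ ω ∂μ, 0 ≤ X ω) :
    (1 + ∫ ω, X ω ∂μ)⁻¹ ≤ ∫ ω, (1 + X ω)⁻¹ ∂μ := by
  have hbdd : Integrable (fun ω => (1 + X ω)⁻¹) μ := by
    refine (integrable_const 1).mono' (hX.aemeasurable.const_add 1).inv.aestronglyMeasurable ?_
    filter_upwards [hX_nonneg] with ω hω
    rw [norm_inv, Real.norm_of_nonneg (by linarith)]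
    exact inv_le_one_of_one_le₀ (by linarith)
  have hcont : ContinuousOn (fun x : ℝ => (1 + x)⁻¹) (Set.Ici 0) :=
    (continuousOn_const.add continuousOn_id).inv₀ fun x hx =>
      (by linarith [Set.mem_Ici.mp hx] : (0 : ℝ) < 1 + x).ne'
  exact convexOn_inv_one_add.map_integral_le hcont isClosed_Ici hX_nonneg hX hbdd

end

lemma inv_one_add_le_exp_sq_sub {θ : ℝ} (hθ : 0 ≤ θ) : (1 + θ)⁻¹ ≤ exp (θ ^ 2 - θ) := by
  rw [inv_le_iff_one_le_mul₀ (by linarith)]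
  nlinarith [add_one_le_exp (θ ^ 2 - θ), pow_nonneg hθ 3]

lemma prod_inv_one_add_le_exp {ι : Type*} (s : Finset ι) {θ : ι → ℝ} (hθ : ∀ i ∈ s, 0 ≤ θ i) :
    ∏ i ∈ s, (1 + θ i)⁻¹ ≤ exp (∑ i ∈ s, θ i ^ 2) * exp (-∑ i ∈ s, θ i) := by
  rw [← exp_add, ← sub_eq_add_neg, ← sum_sub_distrib, exp_sum]
  exact prod_le_prod (fun i hi => by have := hθ i hi; positivity)
    fun i hi => inv_one_add_le_exp_sq_sub (hθ i hi)

theorem expectation_muV_ge_general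
    {Ω : Type*} [MeasurableSpace Ω] (P : Measure Ω) [IsProbabilityMeasure P]
    (K : ℕ) (V : Fin K → Ω → ℝ) (hmeas : ∀ i, Measurable (V i))
    (θ : Fin K → ℝ) (hθ : ∀ i, 0 < θ i)
    (hindep : iIndepFun V P)
    (hdist : ∀ i, Measure.map (V i) P = expMeasure (θ i)⁻¹) :
    Real.exp (-(∑ i, θ i ^ 2)) *
        (1 + ∑ i, Real.exp (-(∑ j ∈ Finset.Iic i, θ j)))⁻¹ ≤
      ∫ ω, (1 + ∑ i, Real.exp (-(∑ j ∈ Finset.Iic i, V j ω)))⁻¹ ∂P := by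
  have hfactor j : 0 < (1 + θ j)⁻¹ := inv_pos.mpr (by linarith [hθ j])
  have hmean i := integral_exp_neg_sum_of_iIndepFun_expMeasure hindep hmeas hθ hdist (Iic i)
  have hint i : Integrable (fun ω => exp (-∑ j ∈ Iic i, V j ω)) P :=
    Integrable.of_integral_ne_zero <| by
      rw [hmean]; exact prod_ne_zero_iff.mpr fun j _ => (hfactor j).ne'
  have hbound : ∑ i, ∏ j ∈ Iic i, (1 + θ j)⁻¹ ≤
      exp (∑ i, θ i ^ 2) * ∑ i, exp (-∑ j ∈ Iic i, θ j) := by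
    rw [mul_sum]
    refine sum_le_sum fun i _ => (prod_inv_one_add_le_exp _ fun j _ => (hθ j).le).trans ?_
    gcongr
    exact subset_univ _
  calc exp (-∑ i, θ i ^ 2) * (1 + ∑ i, exp (-∑ j ∈ Iic i, θ j))⁻¹
      = (exp (∑ i, θ i ^ 2) + exp (∑ i, θ i ^ 2) * ∑ i, exp (-∑ j ∈ Iic i, θ j))⁻¹ := by
        rw [exp_neg, ← mul_inv, mul_one_add]
    _ ≤ (1 + ∑ i, ∏ j ∈ Iic i, (1 + θ j)⁻¹)⁻¹ := by
        gcongr ?_⁻¹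
        · exact add_pos_of_pos_of_nonneg one_pos
            (sum_nonneg fun i _ => prod_nonneg fun j _ => (hfactor j).le)
        · linarith [one_le_exp (by positivity : 0 ≤ ∑ i, θ i ^ 2)]
    _ = (1 + ∫ ω, ∑ i, exp (-∑ j ∈ Iic i, V j ω) ∂P)⁻¹ := by
        rw [integral_finsetSum _ fun i _ => hint i]; simp only [hmean]
    _ ≤ _ := inv_one_add_integral_le (integrable_finsetSum _ fun i _ => hint i)
        (ae_of_all _ fun ω => sum_nonneg fun i _ => (exp_pos _).le)

/-- Jensen lower bound: for independent Exponentials `V i` with means `θ i`,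
`E[μ_V] ≥ exp(-σ²) μ̄_V` where `σ² = ∑ θ i ^ 2`. -/
theorem expectation_muV_ge
    {Ω : Type*} [MeasurableSpace Ω] (P : Measure Ω) [IsProbabilityMeasure P]
    (K : ℕ) (hK : 0 < K) (V : Fin K → Ω → ℝ) (hmeas : ∀ i, Measurable (V i))
    (θ : Fin K → ℝ) (hθ : ∀ i, 0 < θ i)
    (hindep : iIndepFun V P)
    (hdist : ∀ i, Measure.map (V i) P = expMeasure (θ i)⁻¹) :
    Real.exp (-(∑ i, θ i ^ 2)) *
        (1 + ∑ i, Real.exp (-(∑ j ∈ Finset.Iic i, θ j)))⁻¹ ≤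
      ∫ ω, (1 + ∑ i, Real.exp (-(∑ j ∈ Finset.Iic i, V j ω)))⁻¹ ∂P :=
  expectation_muV_ge_general P K V hmeas θ hθ hindep hdist
end

section
/- Let V_1, …, V_K be independent Exponential random variables with means θ_1, …, θ_K, let σ = (∑ θ_i²)^{1/2}, and define the martingale M_i = ∑_{j=1}^i (V_j - θ_j). Then E[exp(M_K/(2σ))] ≤ e^{1/4}. -/
/-!
Independence factorizes the moment generating function of the centred sum at `t` into
`∏ i, e^{-tθ_i} / (1 - tθ_i)`. At `t = 1/(2σ)` every `tθ_i ≤ 1/2`, since `θ_i ≤ σ`, and there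
`1 - x ≥ e^{-x-x²}` bounds each factor by `e^{(tθ_i)²}`; the product is then `e^{t²σ²} = e^{1/4}`.
-/

open MeasureTheory ProbabilityTheory Finset

lemma Real.exp_neg_add_sq_le_one_sub {x : ℝ} (h0 : 0 ≤ x) (h2 : x ≤ 1 / 2) :
    Real.exp (-(x + x ^ 2)) ≤ 1 - x := by
  have hquad := Real.quadratic_le_exp_of_nonneg (show 0 ≤ x + x ^ 2 by positivity)
  have hprod : 1 ≤ (1 - x) * Real.exp (x + x ^ 2) := by
    nlinarith [sq_nonneg x, sq_nonneg (x ^ 2)]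
  rw [Real.exp_neg, inv_le_iff_one_le_mul₀ (Real.exp_pos _)]
  linarith

namespace ProbabilityTheory

lemma hasLaw_of_map_eq {Ω 𝓧 : Type*} [MeasurableSpace Ω] [MeasurableSpace 𝓧] {P : Measure Ω}
    {μ : Measure 𝓧} {X : Ω → 𝓧} (hμ : μ ≠ 0) (h : P.map X = μ) : HasLaw X μ P :=
  ⟨.of_map_ne_zero (h ▸ hμ), h⟩

lemma exponentialPDF_mul_exp_mul {r t : ℝ} (ht : t < r) (x : ℝ) :
    exponentialPDF r x * ENNReal.ofReal (Real.exp (t * x)) =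
      ENNReal.ofReal (r / (r - t)) * exponentialPDF (r - t) x := by
  rcases lt_or_ge x 0 with hx | hx
  · simp [exponentialPDF_of_neg hx]
  · have hrt : 0 < r - t := sub_pos.2 ht
    rw [exponentialPDF_of_nonneg hx, exponentialPDF_of_nonneg hx,
      ← ENNReal.ofReal_mul' (by positivity), ← ENNReal.ofReal_mul' (by positivity)]
    congr 1
    rw [mul_assoc, ← Real.exp_add, ← mul_assoc, div_mul_cancel₀ r hrt.ne']
    ring_nf

lemma mgf_id_expMeasure {r t : ℝ} (hr : 0 ≤ r) (ht : t < r) :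
    mgf id (expMeasure r) t = r / (r - t) := by
  have hrt : 0 < r - t := sub_pos.2 ht
  have hexp : Measurable fun x : ℝ => Real.exp (t * x) := by fun_prop
  have hpdf : ∀ a, Measurable (exponentialPDF a) := fun a =>
    (measurable_exponentialPDFReal a).ennreal_ofReal
  simp only [mgf, id]
  rw [integral_eq_lintegral_of_nonneg_ae (ae_of_all _ fun x => (Real.exp_pos _).le)
    hexp.aestronglyMeasurable, expMeasure, gammaMeasure,
    show gammaPDF 1 r = exponentialPDF r from rfl,
    lintegral_withDensity_eq_lintegral_mul _ (hpdf r) hexp.ennreal_ofReal]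
  simp only [Pi.mul_apply, exponentialPDF_mul_exp_mul ht]
  rw [lintegral_const_mul _ (hpdf _), lintegral_exponentialPDF_eq_one hrt, mul_one,
    ENNReal.toReal_ofReal (by positivity)]

lemma mgf_sub_le_exp_sq_of_hasLaw_expMeasure {Ω : Type*} [MeasurableSpace Ω] {P : Measure Ω}
    {V : Ω → ℝ} {θ t : ℝ} (hθ : 0 < θ) (hV : HasLaw V (expMeasure θ⁻¹) P)
    (ht : 0 ≤ t) (htθ : t * θ ≤ 1 / 2) :
    mgf (fun ω => V ω - θ) P t ≤ Real.exp ((t * θ) ^ 2) := by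
  have hpos : 0 < 1 - t * θ := by linarith
  have hmgf : mgf V P t = (1 - t * θ)⁻¹ := by
    rw [← mgf_id_map hV.aemeasurable, hV.map_eq,
      mgf_id_expMeasure (inv_pos.2 hθ).le (by rw [← one_div, lt_div_iff₀ hθ]; linarith)]
    field_simp
  simp_rw [sub_eq_add_neg]
  rw [mgf_add_const, hmgf, ← div_eq_inv_mul, div_le_iff₀ hpos]
  calc Real.exp (t * -θ) = Real.exp (-(t * θ + (t * θ) ^ 2)) * Real.exp ((t * θ) ^ 2) := by
        rw [← Real.exp_add]; ring_nf
    _ ≤ (1 - t * θ) * Real.exp ((t * θ) ^ 2) := by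
        gcongr
        exact Real.exp_neg_add_sq_le_one_sub (by positivity) htθ
    _ = Real.exp ((t * θ) ^ 2) * (1 - t * θ) := mul_comm _ _

lemma mgf_sum_sub_le_exp_of_hasLaw_expMeasure {Ω ι : Type*} [MeasurableSpace Ω]
    {P : Measure Ω} [Fintype ι] {V : ι → Ω → ℝ} {θ : ι → ℝ} {t : ℝ} (hθ : ∀ i, 0 < θ i)
    (hV : ∀ i, HasLaw (V i) (expMeasure (θ i)⁻¹) P) (hindep : iIndepFun V P)
    (ht : 0 ≤ t) (htθ : ∀ i, t * θ i ≤ 1 / 2) :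
    mgf (fun ω => ∑ i, (V i ω - θ i)) P t ≤ Real.exp (t ^ 2 * ∑ i, θ i ^ 2) := by
  have hcentered : iIndepFun (fun i ω => V i ω - θ i) P :=
    hindep.comp₀ (fun i x => x - θ i) (fun i => (hV i).aemeasurable) (fun i => by fun_prop)
  have hsum := hcentered.mgf_sum₀ (t := t) (fun i => (hV i).aemeasurable.sub_const _) univ
  rw [← Finset.sum_fn, hsum, mul_sum, Real.exp_sum]
  refine prod_le_prod (fun i _ => mgf_nonneg) fun i _ => ?_
  rw [← mul_pow]
  exact mgf_sub_le_exp_sq_of_hasLaw_expMeasure (hθ i) (hV i) ht (htθ i)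

end ProbabilityTheory

theorem mgf_centered_exponential_sum_le_general
    {Ω : Type*} [MeasurableSpace Ω] (P : Measure Ω)
    (K : ℕ) (V : Fin K → Ω → ℝ)
    (θ : Fin K → ℝ) (hθ : ∀ i, 0 < θ i)
    (hindep : iIndepFun V P)
    (hdist : ∀ i, Measure.map (V i) P = expMeasure (θ i)⁻¹) :
    ∫ ω, Real.exp ((∑ i, (V i ω - θ i)) / (2 * Real.sqrt (∑ i, θ i ^ 2))) ∂P ≤
      Real.exp (1 / 4) := by
  set σ := Real.sqrt (∑ i, θ i ^ 2)
  have hσ_sq : ∑ i, θ i ^ 2 = σ ^ 2 :=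
    (Real.sq_sqrt (sum_nonneg fun i _ => sq_nonneg (θ i))).symm
  have hθσ : ∀ i, θ i ≤ σ := fun i =>
    Real.le_sqrt_of_sq_le (single_le_sum (fun j _ => sq_nonneg (θ j)) (mem_univ i))
  have htθ : ∀ i, (2 * σ)⁻¹ * θ i ≤ 1 / 2 := fun i => by
    rw [← div_eq_inv_mul, div_le_iff₀ (by linarith [hθ i, hθσ i])]
    linarith [hθσ i]
  have hV : ∀ i, HasLaw (V i) (expMeasure (θ i)⁻¹) P := fun i =>
    hasLaw_of_map_eq (isProbabilityMeasure_expMeasure (inv_pos.2 (hθ i))).ne_zero (hdist i)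
  calc ∫ ω, Real.exp ((∑ i, (V i ω - θ i)) / (2 * σ)) ∂P
      = mgf (fun ω => ∑ i, (V i ω - θ i)) P (2 * σ)⁻¹ := by simp_rw [mgf, div_eq_inv_mul]
    _ ≤ Real.exp ((2 * σ)⁻¹ ^ 2 * ∑ i, θ i ^ 2) :=
      mgf_sum_sub_le_exp_of_hasLaw_expMeasure hθ hV hindep (by positivity) htθ
    _ ≤ Real.exp (1 / 4) := by
      gcongr
      rw [hσ_sq, ← mul_pow, ← div_eq_inv_mul]
      rcases eq_or_ne σ 0 with h | h
      · norm_num [h]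
      · norm_num [div_mul_cancel_right₀ h]

/-- MGF bound for the centered sum of independent Exponentials:
with `σ = (∑ θ i ^ 2)^{1/2}` and `M_K = ∑ i (V i - θ i)`,
`E[exp(M_K/(2σ))] ≤ e^{1/4}`. -/
theorem mgf_centered_exponential_sum_le
    {Ω : Type*} [MeasurableSpace Ω] (P : Measure Ω) [IsProbabilityMeasure P]
    (K : ℕ) (hK : 0 < K) (V : Fin K → Ω → ℝ) (hmeas : ∀ i, Measurable (V i))
    (θ : Fin K → ℝ) (hθ : ∀ i, 0 < θ i)
    (hindep : iIndepFun V P)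
    (hdist : ∀ i, Measure.map (V i) P = expMeasure (θ i)⁻¹) :
    ∫ ω, Real.exp ((∑ i, (V i ω - θ i)) / (2 * Real.sqrt (∑ i, θ i ^ 2))) ∂P ≤
      Real.exp (1 / 4) :=
  mgf_centered_exponential_sum_le_general P K V θ hθ hindep hdist
end

section
/- Let (Y_j)_{j≥1} be nonnegative real numbers, γ' ∈ (0,1), and for n ≥ 2 define μ_1(n) = 1/(1 + ∑_{i=1}^{n-1} exp(−∑_{j=1}^i Y_j)) and μ_1'(n) = 1/(1 + ∑_{i=1}^{⌊γ' n⌋} exp(−∑_{j=1}^i Y_j)). Then |log μ_1(n) − log μ_1'(n)| ≤ (1 − γ')/γ'. -/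
/-!
With `f i = exp (-∑_{j ≤ i} Y j)` we have `f 0 = 1`, so `1 + ∑_{i=1}^k f i = S k := ∑_{i=0}^k f i`,
and `f` is antitone. The running averages `S k / (k + 1)` of an antitone sequence decrease, hence
for `m = ⌊γ' n⌋ ≤ n - 1` we get `S m ≤ S (n - 1) ≤ n / (m + 1) * S m`. Taking logarithms, the
difference is at most `log (n / (m + 1)) ≤ n / (m + 1) - 1 < 1 / γ' - 1`, because `γ' n < m + 1`.
-/

open Finset

theorem Antitone.mul_sum_range_le {K : Type*} [Field K] [LinearOrder K] [IsStrictOrderedRing K]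
    {f : ℕ → K} (hf : Antitone f) {m k : ℕ} (hmk : m ≤ k) :
    (m + 1 : K) * ∑ i ∈ range (k + 1), f i ≤ (k + 1) * ∑ i ∈ range (m + 1), f i := by
  have head : (m + 1 : K) * f m ≤ ∑ i ∈ range (m + 1), f i := by
    simpa using card_nsmul_le_sum (range (m + 1)) f (f m)
      fun i hi => hf (Nat.lt_succ_iff.mp (mem_range.mp hi))
  have tail : ∑ i ∈ Ico (m + 1) (k + 1), f i ≤ (k - m : K) * f m := by
    simpa [Nat.cast_sub hmk] using sum_le_card_nsmul (Ico (m + 1) (k + 1)) f (f m)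
      fun i hi => hf (Nat.le_of_succ_le (mem_Ico.mp hi).1)
  rw [← sum_range_add_sum_Ico f (by omega : m + 1 ≤ k + 1)]
  have hkm : (m : K) ≤ k := by exact_mod_cast hmk
  nlinarith

theorem Antitone.log_sum_range_sub_log_sum_range_le {f : ℕ → ℝ} (hf : Antitone f)
    (hpos : ∀ i, 0 < f i) {m k : ℕ} (hmk : m ≤ k) :
    Real.log (∑ i ∈ range (k + 1), f i) - Real.log (∑ i ∈ range (m + 1), f i) ≤
      Real.log ((k + 1) / (m + 1)) := by
  have hSm : 0 < ∑ i ∈ range (m + 1), f i := sum_pos (fun i _ => hpos i) nonempty_range_add_one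
  have hSk : 0 < ∑ i ∈ range (k + 1), f i := sum_pos (fun i _ => hpos i) nonempty_range_add_one
  rw [← Real.log_div hSk.ne' hSm.ne']
  refine Real.log_le_log (div_pos hSk hSm) ?_
  rw [div_le_div_iff₀ hSm (by positivity)]
  linarith [hf.mul_sum_range_le hmk]

theorem Finset.sum_range_add_one_eq_add_sum_Icc {M : Type*} [AddCommMonoid M] (g : ℕ → M)
    (k : ℕ) : ∑ i ∈ range (k + 1), g i = g 0 + ∑ i ∈ Icc 1 k, g i := by
  rw [range_eq_Ico, sum_eq_sum_Ico_succ_bot (by omega : 0 < k + 1), zero_add,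
    Ico_add_one_right_eq_Icc]

theorem div_floor_mul_add_one_le {K : Type*} [Field K] [LinearOrder K] [IsStrictOrderedRing K]
    [FloorSemiring K] {γ : K} (hγ : 0 < γ) (x : K) : x / (⌊γ * x⌋₊ + 1) ≤ γ⁻¹ := by
  rw [div_le_iff₀ (by positivity), ← div_eq_inv_mul, le_div_iff₀ hγ, mul_comm]
  exact (Nat.lt_floor_add_one _).le

theorem log_mu_truncation_bound_general (Y : ℕ → ℝ) (hY : ∀ j, 0 ≤ Y j)
    (γ' : ℝ) (hγ0 : 0 < γ') (hγ1 : γ' < 1) (n : ℕ) :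
    |Real.log (1 + ∑ i ∈ Finset.Icc 1 (n - 1),
          Real.exp (-(∑ j ∈ Finset.Icc 1 i, Y j)))⁻¹ -
        Real.log (1 + ∑ i ∈ Finset.Icc 1 (Nat.floor (γ' * n)),
          Real.exp (-(∑ j ∈ Finset.Icc 1 i, Y j)))⁻¹| ≤
      (1 - γ') / γ' := by
  rcases Nat.eq_zero_or_pos n with rfl | hn
  · simpa using div_nonneg (sub_nonneg.2 hγ1.le) hγ0.le
  set f : ℕ → ℝ := fun i => Real.exp (-∑ j ∈ Icc 1 i, Y j)
  have hf : Antitone f := fun i i' h => Real.exp_le_exp.2 <| neg_le_neg <|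
    sum_le_sum_of_subset_of_nonneg (Icc_subset_Icc_right h) fun j _ _ => hY j
  have hS (k : ℕ) : 1 + ∑ i ∈ Icc 1 k, f i = ∑ i ∈ range (k + 1), f i := by
    simp [sum_range_add_one_eq_add_sum_Icc, f]
  set m := ⌊γ' * n⌋₊
  have hmn : m ≤ n - 1 :=
    Nat.le_sub_one_of_lt <| (Nat.floor_lt (by positivity)).2 <| by
      nlinarith [(Nat.one_le_cast (α := ℝ)).2 hn]
  have hmono : Real.log (∑ i ∈ range (m + 1), f i) ≤ Real.log (∑ i ∈ range (n - 1 + 1), f i) :=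
    Real.log_le_log (by positivity) <| sum_le_sum_of_subset_of_nonneg
      (range_subset_range.2 (by omega)) fun i _ _ => (Real.exp_pos _).le
  have hn' : ((n - 1 : ℕ) : ℝ) + 1 = n := by exact_mod_cast Nat.sub_add_cancel hn
  rw [hS, hS, Real.log_inv, Real.log_inv, neg_sub_neg, abs_sub_comm,
    abs_of_nonneg (sub_nonneg.2 hmono)]
  calc _ ≤ Real.log ((((n - 1 : ℕ) : ℝ) + 1) / (m + 1)) :=
        hf.log_sum_range_sub_log_sum_range_le (fun _ => Real.exp_pos _) hmn
    _ ≤ n / (m + 1) - 1 := hn' ▸ Real.log_le_sub_one_of_pos (by positivity)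
    _ ≤ γ'⁻¹ - 1 := by gcongr; exact div_floor_mul_add_one_le hγ0 n
    _ = (1 - γ') / γ' := by field_simp

/-- Deterministic truncation estimate: for nonnegative `Y_j`, `γ' ∈ (0,1)` and `n ≥ 2`,
with `μ₁(n) = (1 + ∑_{i=1}^{n-1} exp(−∑_{j=1}^i Y_j))⁻¹` and
`μ₁'(n) = (1 + ∑_{i=1}^{⌊γ' n⌋} exp(−∑_{j=1}^i Y_j))⁻¹`,
one has `|log μ₁(n) − log μ₁'(n)| ≤ (1 − γ')/γ'`. -/
theorem log_mu_truncation_bound (Y : ℕ → ℝ) (hY : ∀ j, 0 ≤ Y j)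
    (γ' : ℝ) (hγ0 : 0 < γ') (hγ1 : γ' < 1) (n : ℕ) (hn : 2 ≤ n) :
    |Real.log (1 + ∑ i ∈ Finset.Icc 1 (n - 1),
          Real.exp (-(∑ j ∈ Finset.Icc 1 i, Y j)))⁻¹ -
        Real.log (1 + ∑ i ∈ Finset.Icc 1 (Nat.floor (γ' * n)),
          Real.exp (-(∑ j ∈ Finset.Icc 1 i, Y j)))⁻¹| ≤
      (1 - γ') / γ' :=
  log_mu_truncation_bound_general Y hY γ' hγ0 hγ1 n
end
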